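/- For a = −1/2, the elephant polynomial admits the expansion R_n(x) = 2^{−(n−1)} · Σ_{k=0}^{⌊n/2⌋} C(n, 2k) · x^{n−2k}, where C(n,2k) is a binomial coefficient. -/

import Mathlib

/-! For `a = -1/2` the recurrence is solved by `R_n = 2⁻ⁿ S_n` with `S_n = (x + 1)ⁿ + (x - 1)ⁿ`:
since `S_n' = n S_{n-1}` and `1 - x² = -(x + 1)(x - 1)`, the sums obey
`S_{n+1} = 2x S_n + (1 - x²) S_{n-1}`, which is exactly the recurrence after scaling.
Expanding both powers binomially, the terms with an odd power of `1` cancel and the others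
double. -/

open Polynomial

/-- The elephant polynomials: `R a 1 = X` and
`R a (n+1) = X * R a n - (a/n) * (1 - X^2) * (R a n)'` for `n ≥ 1`. -/
noncomputable def elephantR (a : ℝ) : ℕ → Polynomial ℝ
  | 0 => 1
  | 1 => X
  | n + 2 => X * elephantR a (n + 1) -
      C (a / ((n : ℝ) + 1)) * ((1 - X ^ 2) * (elephantR a (n + 1)).derivative)

open Finset

theorem Finset.sum_range_succ_one_add_neg_one_pow_mul {R : Type*} [Ring R] (f : ℕ → R) (n : ℕ) :
    ∑ j ∈ range (n + 1), (1 + (-1) ^ j) * f j = 2 * ∑ k ∈ range (n / 2 + 1), f (2 * k) := by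
  have h_evens : {j ∈ range (n + 1) | Even j} = (range (n / 2 + 1)).image (2 * ·) := by
    ext j
    simp only [mem_filter, mem_range, mem_image, Nat.even_iff]
    constructor
    · rintro ⟨hj, hev⟩
      exact ⟨j / 2, by omega, by omega⟩
    · rintro ⟨k, hk, rfl⟩
      omega
  calc ∑ j ∈ range (n + 1), (1 + (-1) ^ j) * f j
      = ∑ j ∈ range (n + 1), if Even j then 2 * f j else 0 := by
        refine sum_congr rfl fun j _ => ?_
        rcases Nat.even_or_odd j with h | h
        · rw [h.neg_one_pow, if_pos h, one_add_one_eq_two]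
        · rw [h.neg_one_pow, if_neg (Nat.not_even_iff_odd.mpr h), add_neg_cancel, zero_mul]
    _ = ∑ j ∈ (range (n / 2 + 1)).image (2 * ·), 2 * f j := by rw [← sum_filter, h_evens]
    _ = 2 * ∑ k ∈ range (n / 2 + 1), f (2 * k) := by
        rw [sum_image fun a _ b _ h => by omega, mul_sum]

theorem add_pow_add_sub_pow {R : Type*} [CommRing R] (x y : R) (n : ℕ) :
    (x + y) ^ n + (x - y) ^ n =
      2 * ∑ k ∈ range (n / 2 + 1), x ^ (n - 2 * k) * y ^ (2 * k) * n.choose (2 * k) := by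
  calc (x + y) ^ n + (x - y) ^ n
      = ∑ j ∈ range (n + 1), (1 + (-1) ^ j) * (x ^ (n - j) * y ^ j * n.choose j) := by
        rw [add_comm x, sub_eq_neg_add, add_pow, add_pow, ← sum_add_distrib]
        refine sum_congr rfl fun j _ => ?_
        rw [neg_pow]
        ring
    _ = _ := sum_range_succ_one_add_neg_one_pow_mul _ n

theorem add_one_pow_add_sub_one_pow_add_two {R : Type*} [CommRing R] (x : R) (m : ℕ) :
    (x + 1) ^ (m + 2) + (x - 1) ^ (m + 2) =
      2 * x * ((x + 1) ^ (m + 1) + (x - 1) ^ (m + 1)) +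
        (1 - x ^ 2) * ((x + 1) ^ m + (x - 1) ^ m) := by
  ring

theorem C_inv_two_pow_succ_mul_two (m : ℕ) :
    C ((2 : ℝ) ^ (m + 1))⁻¹ * 2 = C ((2 : ℝ) ^ m)⁻¹ := by
  rw [← C_ofNat, ← C_mul]
  congr 1
  ring

theorem elephantR_neg_half_eq (n : ℕ) (hn : 1 ≤ n) :
    elephantR (-1/2) n = C ((2 : ℝ) ^ n)⁻¹ * ((X + 1) ^ n + (X - 1) ^ n) := by
  induction n, hn using Nat.le_induction with
  | base =>
    have h_half : C (2 : ℝ)⁻¹ * 2 = 1 := by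
      rw [← C_ofNat, ← C_mul, inv_mul_cancel₀ two_ne_zero, C_1]
    show X = _
    simp only [pow_one]
    linear_combination (-X) * h_half
  | succ n _ ih =>
    obtain ⟨m, rfl⟩ : ∃ m, n = m + 1 := ⟨n - 1, by omega⟩
    have h_deriv : derivative ((X + 1 : ℝ[X]) ^ (m + 1) + (X - 1) ^ (m + 1)) =
        C ((m : ℝ) + 1) * ((X + 1) ^ m + (X - 1) ^ m) := by
      simp [derivative_pow, mul_add]
    show X * elephantR (-1/2) (m + 1) -
      C ((-1/2) / ((m : ℝ) + 1)) * ((1 - X ^ 2) * (elephantR (-1/2) (m + 1)).derivative) = _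
    rw [ih, derivative_C_mul, h_deriv, add_one_pow_add_sub_one_pow_add_two]
    have hm : (m : ℝ) + 1 ≠ 0 := by positivity
    have h_coeff : C ((-1/2) / ((m : ℝ) + 1)) * C ((m : ℝ) + 1) = C (-1/2) := by
      rw [← C_mul, div_mul_cancel₀ _ hm]
    have h_half : C (-1/2) * C ((2 : ℝ) ^ (m + 1))⁻¹ = -C ((2 : ℝ) ^ (m + 1 + 1))⁻¹ := by
      rw [← C_mul, ← C_neg]
      congr 1
      ring
    set S₁ : ℝ[X] := (X + 1) ^ (m + 1) + (X - 1) ^ (m + 1)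
    set S₀ : ℝ[X] := (X + 1) ^ m + (X - 1) ^ m
    linear_combination (-X * S₁) * C_inv_two_pow_succ_mul_two (m + 1)
      - (1 - X ^ 2) * S₀ * C ((2 : ℝ) ^ (m + 1))⁻¹ * h_coeff - (1 - X ^ 2) * S₀ * h_half

theorem stmt_9 (n : ℕ) (hn : 1 ≤ n) :
    elephantR (-1/2) n =
      C ((2 : ℝ) ^ (n - 1))⁻¹ *
        ∑ k ∈ Finset.range (n / 2 + 1), C (n.choose (2 * k) : ℝ) * X ^ (n - 2 * k) := by
  obtain ⟨m, rfl⟩ : ∃ m, n = m + 1 := ⟨n - 1, by omega⟩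
  rw [elephantR_neg_half_eq _ hn, add_pow_add_sub_pow, ← mul_assoc, C_inv_two_pow_succ_mul_two,
    Nat.add_sub_cancel]
  congr 1
  refine sum_congr rfl fun k _ => ?_
  rw [one_pow, mul_one, C_eq_natCast, mul_comm]
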